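/- arXiv:2107.11898 — 2 statements merged into one kernel-verified Lean document; each statement's English description precedes it below -/
import Mathlib

section
/- Let f : A ⥤ B be a functor between categories. Then f reflects isomorphisms (is conservative) if and only if the canonical comparison functor r : A ⥤ P into the pseudo-pullback P of c_B and f^𝟚 is an equivalence of categories. -/
set_option maxRecDepth 8000
set_option maxHeartbeats 1000000

open CategoryTheory

universe v₁ v₂ u₁ u₂

/-- The functor `c_A : A ⥤ Arrow A` sending an object to its identity arrow. -/
def idArrowFunctor (A : Type u₁) [Category.{v₁} A] : A ⥤ Arrow A where
  obj a := Arrow.mk (𝟙 a)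
  map {a a'} x := Arrow.homMk (u := x) (v := x) (by simp)

variable {A : Type u₁} {B : Type u₂} [Category.{v₁} A] [Category.{v₂} B]

/-- The pseudo-pullback of `c_B : B ⥤ B^𝟚` and `f^𝟚 : A^𝟚 ⥤ B^𝟚`, realized as the full
subcategory of the comma category `(c_B ↓ f^𝟚)` spanned by the objects whose structural
morphism is an isomorphism. -/
abbrev PseudoPullback (f : A ⥤ B) :=
  ObjectProperty.FullSubcategory (fun X : Comma (idArrowFunctor B) f.mapArrow => IsIso X.hom)

/-- The canonical comparison functor `r : A ⥤ P`. -/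
def comparison (f : A ⥤ B) : A ⥤ PseudoPullback f where
  obj a :=
    ⟨{ left := f.obj a
       right := Arrow.mk (𝟙 a)
       hom := (Arrow.isoMk (f := (idArrowFunctor B).obj (f.obj a))
         (g := f.mapArrow.obj (Arrow.mk (𝟙 a))) (Iso.refl _) (Iso.refl _) (by simp [idArrowFunctor, Functor.mapArrow])).hom },
      inferInstance⟩
  map {a a'} x :=
    { hom :=
      { left := f.map x
        right := Arrow.homMk (u := x) (v := x) (by simp)
        w := by ext <;> (change _ ≫ 𝟙 _ = 𝟙 _ ≫ _; simp [idArrowFunctor]) } }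

/-- The functor `u : P ⥤ A` sending `(b, g, φ)` to the domain of `g`. -/
def pbProj (f : A ⥤ B) : PseudoPullback f ⥤ A where
  obj X := X.obj.right.left
  map g := g.hom.right.left

section Aux

@[simp] lemma idArrowFunctor_obj_hom (a : A) :
    ((idArrowFunctor A).obj a).hom = 𝟙 a := rfl

@[simp] lemma idArrowFunctor_obj_left (a : A) :
    ((idArrowFunctor A).obj a).left = a := rfl

@[simp] lemma idArrowFunctor_obj_right (a : A) :
    ((idArrowFunctor A).obj a).right = a := rfl

@[simp] lemma idArrowFunctor_map_left {a a' : A} (x : a ⟶ a') :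
    ((idArrowFunctor A).map x).left = x := rfl

@[simp] lemma idArrowFunctor_map_right {a a' : A} (x : a ⟶ a') :
    ((idArrowFunctor A).map x).right = x := rfl

variable (f : A ⥤ B)

@[simp] lemma comparison_obj_obj_left (a : A) :
    ((comparison f).obj a).obj.left = f.obj a := rfl

@[simp] lemma comparison_obj_obj_right (a : A) :
    ((comparison f).obj a).obj.right = Arrow.mk (𝟙 a) := rfl

@[simp] lemma comparison_obj_obj_hom_left (a : A) :
    ((comparison f).obj a).obj.hom.left = 𝟙 (f.obj a) := rfl

@[simp] lemma comparison_obj_obj_hom_right (a : A) :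
    ((comparison f).obj a).obj.hom.right = 𝟙 (f.obj a) := rfl

@[simp] lemma comparison_map_left {a a' : A} (x : a ⟶ a') :
    ((comparison f).map x).hom.left = f.map x := rfl

@[simp] lemma comparison_map_right_left {a a' : A} (x : a ⟶ a') :
    ((comparison f).map x).hom.right.left = x := rfl

@[simp] lemma comparison_map_right_right {a a' : A} (x : a ⟶ a') :
    ((comparison f).map x).hom.right.right = x := rfl

@[simp] lemma pbProj_obj (X : PseudoPullback f) : (pbProj f).obj X = X.obj.right.left := rfl

@[simp] lemma pbProj_map {X Y : PseudoPullback f} (m : X ⟶ Y) :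
    (pbProj f).map m = m.hom.right.left := rfl

lemma structural_w (X : PseudoPullback f) :
    X.obj.hom.left ≫ f.map X.obj.right.hom = X.obj.hom.right := by
  exact (Arrow.w X.obj.hom).trans (Category.id_comp _)

lemma isIso_fmap_of_mem (X : PseudoPullback f) : IsIso (f.map X.obj.right.hom) := by
  have h1 : IsIso X.obj.hom := X.property
  have h2 : IsIso X.obj.hom.left := inferInstance
  have h3 : IsIso X.obj.hom.right := inferInstance
  have h4 : IsIso (X.obj.hom.left ≫ f.map X.obj.right.hom) := by
    rw [structural_w]; exact h3
  exact @IsIso.of_isIso_comp_left _ _ _ _ _ _ _ h2 h4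

variable (h : ∀ {a a' : A} (g : a ⟶ a'), IsIso (f.map g) → IsIso g)

/-- The counit component, as an isomorphism in the comma category. -/
noncomputable def counitAppComma (X : PseudoPullback f) :
    ((comparison f).obj ((pbProj f).obj X)).obj ≅ X.obj := by
  have h1 : IsIso X.obj.hom := X.property
  have h2 : IsIso X.obj.hom.left := inferInstance
  have hg : IsIso X.obj.right.hom := h _ (isIso_fmap_of_mem f X)
  let l : X.obj.left ⟶ f.obj X.obj.right.left := X.obj.hom.left
  let r : X.obj.left ⟶ f.obj X.obj.right.right := X.obj.hom.right
  let g : X.obj.right.left ⟶ X.obj.right.right := X.obj.right.hom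
  have hl : IsIso l := h2
  have hg' : IsIso g := hg
  have hw : l ≫ f.map g = r := structural_w f X
  exact
  { hom :=
    { left := @inv _ _ _ _ X.obj.hom.left h2
      right := Arrow.homMk (u := 𝟙 X.obj.right.left) (v := X.obj.right.hom) (by simp)
      w := by
        apply CommaMorphism.ext
        · exact (show inv l ≫ l = 𝟙 (f.obj X.obj.right.left) ≫ f.map (𝟙 X.obj.right.left) by simp)
        · exact (show inv l ≫ r = 𝟙 (f.obj X.obj.right.left) ≫ f.map g by
            rw [← hw, IsIso.inv_hom_id_assoc]; simp) }
    inv :=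
    { left := X.obj.hom.left
      right := Arrow.homMk (u := 𝟙 X.obj.right.left) (v := @inv _ _ _ _ X.obj.right.hom hg) (by simp)
      w := by
        apply CommaMorphism.ext
        · exact (show l ≫ 𝟙 (f.obj X.obj.right.left) = l ≫ f.map (𝟙 X.obj.right.left) by simp)
        · exact (show l ≫ 𝟙 (f.obj X.obj.right.left) = r ≫ f.map (inv g) by
            rw [← hw]; simp) }
    hom_inv_id := by
      apply CommaMorphism.ext
      · exact IsIso.inv_hom_id l
      · apply CommaMorphism.ext
        · exact Category.id_comp (𝟙 X.obj.right.left)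
        · exact IsIso.hom_inv_id g
    inv_hom_id := by
      apply CommaMorphism.ext
      · exact IsIso.hom_inv_id l
      · apply CommaMorphism.ext
        · exact Category.id_comp (𝟙 X.obj.right.left)
        · exact IsIso.inv_hom_id g }

/-- The counit component. -/
noncomputable def counitApp (X : PseudoPullback f) :
    (pbProj f ⋙ comparison f).obj X ≅ X where
  hom := ⟨(counitAppComma f h X).hom⟩
  inv := ⟨(counitAppComma f h X).inv⟩
  hom_inv_id := by apply ObjectProperty.hom_ext; exact (counitAppComma f h X).hom_inv_id
  inv_hom_id := by apply ObjectProperty.hom_ext; exact (counitAppComma f h X).inv_hom_id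

lemma counit_natural {X Y : PseudoPullback f} (m : X ⟶ Y) :
    (pbProj f ⋙ comparison f).map m ≫ (counitApp f h Y).hom
      = (counitApp f h X).hom ≫ (𝟭 (PseudoPullback f)).map m := by
  have h1 : IsIso X.obj.hom := X.property
  have h1' : IsIso Y.obj.hom := Y.property
  have h2 : IsIso X.obj.hom.left := inferInstance
  have h2' : IsIso Y.obj.hom.left := inferInstance
  let lX : X.obj.left ⟶ f.obj X.obj.right.left := X.obj.hom.left
  let lY : Y.obj.left ⟶ f.obj Y.obj.right.left := Y.obj.hom.left
  have hlX : IsIso lX := h2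
  have hlY : IsIso lY := h2'
  have hw : m.hom.left ≫ lY = lX ≫ f.map m.hom.right.left :=
    congrArg CommaMorphism.left m.hom.w
  apply (ObjectProperty.ι _).map_injective
  rw [Functor.map_comp, Functor.map_comp,
    ObjectProperty.ι_map, ObjectProperty.ι_map,
    ObjectProperty.ι_map, ObjectProperty.ι_map]
  apply CommaMorphism.ext
  · exact (show f.map m.hom.right.left ≫ inv lY = inv lX ≫ m.hom.left by
      rw [IsIso.comp_inv_eq, Category.assoc, hw, IsIso.inv_hom_id_assoc])
  · apply CommaMorphism.ext
    · exact (show m.hom.right.left ≫ 𝟙 _ = 𝟙 _ ≫ m.hom.right.left by simp)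
    · exact Arrow.w m.hom.right

end Aux

/-- A functor `f : A ⥤ B` reflects isomorphisms (is conservative) if and only if the canonical
comparison functor `r : A ⥤ P` into the pseudo-pullback `P` of `c_B` and `f^𝟚` is an
equivalence of categories. -/
theorem conservative_iff_comparison_isEquivalence (f : A ⥤ B) :
    (∀ {a a' : A} (g : a ⟶ a'), IsIso (f.map g) → IsIso g) ↔
      (comparison f).IsEquivalence := by
  constructor
  · intro h
    exact (CategoryTheory.Equivalence.mk (comparison f) (pbProj f)
      (NatIso.ofComponents (fun a => Iso.refl a) (by intros; simp))
      (NatIso.ofComponents (fun X => counitApp f h X)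
        (fun m => counit_natural f h m))).isEquivalence_functor
  · intro hEq a a' g hg
    let X : PseudoPullback f :=
      ⟨{ left := f.obj a
         right := Arrow.mk g
         hom := (Arrow.isoMk (f := (idArrowFunctor B).obj (f.obj a))
           (g := f.mapArrow.obj (Arrow.mk g)) (Iso.refl _) (@asIso _ _ _ _ (f.map g) hg)
           (by simp [idArrowFunctor]; exact Category.id_comp _)).hom }, inferInstance⟩
    let c := (comparison f).objPreimage X
    let e : (comparison f).obj c ≅ X := (comparison f).objObjPreimageIso X
    let e' := (ObjectProperty.ι _).mapIso e
    have h1 : IsIso e'.hom := inferInstance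
    have h2 : IsIso e'.hom.right := inferInstance
    have h3 : IsIso e'.hom.right.left := inferInstance
    have hw : e'.hom.right.left ≫ g = (Arrow.mk (𝟙 c)).hom ≫ e'.hom.right.right :=
      Arrow.w e'.hom.right
    have h4 : IsIso e'.hom.right.right := inferInstance
    let u : c ⟶ a := e'.hom.right.left
    let v : c ⟶ a' := e'.hom.right.right
    have hu : IsIso u := h3
    have hv : IsIso v := h4
    have hw' : u ≫ g = v := hw.trans (Category.id_comp _)
    have : g = inv u ≫ v := by
      rw [IsIso.eq_inv_comp, hw']
    rw [this]
    infer_instance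
end

section
/- Let f : A ⥤ B be a functor between categories. The commutative square in the category Cat of categories formed by the inclusions b_A : A^I ⥤ A^𝟚, b_B : B^I ⥤ B^𝟚 and the induced functors f^I : A^I ⥤ B^I, f^𝟚 : A^𝟚 ⥤ B^𝟚 (so that b_B ∘ f^I = f^𝟚 ∘ b_A) is a pullback square in Cat if and only if f reflects isomorphisms. -/
open CategoryTheory

universe v u

/-- The category of isomorphisms of `B`: the full subcategory of the arrow category `B^𝟚`
spanned by those arrows that are isomorphisms. -/
abbrev IsoArrow (B : Type u) [Category.{v} B] :=
  ObjectProperty.FullSubcategory (fun g : Arrow B => IsIso g.hom)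

/-- The full inclusion `b_B : B^I ⥤ B^𝟚`. -/
abbrev isoArrowInclusion (B : Type u) [Category.{v} B] : IsoArrow B ⥤ Arrow B :=
  ObjectProperty.ι _

/-- The restriction `f^I : A^I ⥤ B^I` of a functor `f : A ⥤ B`. -/
def mapIsoArrow {A : Type u} {B : Type u} [Category.{v} A] [Category.{v} B] (f : A ⥤ B) :
    IsoArrow A ⥤ IsoArrow B :=
  ObjectProperty.lift _ (isoArrowInclusion A ⋙ f.mapArrow)
    (fun X => by
      have : IsIso X.obj.hom := X.property
      exact inferInstanceAs (IsIso (f.map X.obj.hom)))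

/-- Functors into a full subcategory are equal if their compositions with the inclusion are. -/
lemma incl_cancel {C : Type u} [Category.{v} C] (Z : C → Prop) {P : Type*} [Category P]
    (H K : P ⥤ ObjectProperty.FullSubcategory Z)
    (h : H ⋙ ObjectProperty.ι Z = K ⋙ ObjectProperty.ι Z) : H = K := by
  have hobj : ∀ X, H.obj X = K.obj X := by
    intro X
    ext
    exact Functor.congr_obj h X
  refine CategoryTheory.Functor.ext hobj (fun X Y m => ?_)
  apply (ObjectProperty.ι Z).map_injective
  simp only [Functor.map_comp, eqToHom_map]
  exact Functor.congr_hom h m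

/-- The commutative square in `Cat` formed by the inclusions `b_A : A^I ⥤ A^𝟚`,
`b_B : B^I ⥤ B^𝟚` and the induced functors `f^I : A^I ⥤ B^I`, `f^𝟚 : A^𝟚 ⥤ B^𝟚` is a
pullback square in `Cat` if and only if `f` reflects isomorphisms. -/
theorem isPullback_iff_reflectsIsomorphisms
    {A : Type u} {B : Type u} [Category.{v} A] [Category.{v} B] (f : A ⥤ B) :
    IsPullback
        (show Cat.of (IsoArrow A) ⟶ Cat.of (Arrow A) from (isoArrowInclusion A).toCatHom)
        (show Cat.of (IsoArrow A) ⟶ Cat.of (IsoArrow B) from (mapIsoArrow f).toCatHom)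
        (show Cat.of (Arrow A) ⟶ Cat.of (Arrow B) from f.mapArrow.toCatHom)
        (show Cat.of (IsoArrow B) ⟶ Cat.of (Arrow B) from (isoArrowInclusion B).toCatHom) ↔
      ∀ {a a' : A} (g : a ⟶ a'), IsIso (f.map g) → IsIso g := by
  constructor
  · intro hp a a' g hg
    let P := ObjectProperty.FullSubcategory (fun g : Arrow A => IsIso (f.map g.hom))
    let fst : Cat.of P ⟶ Cat.of (Arrow A) := (ObjectProperty.ι _).toCatHom
    let snd : Cat.of P ⟶ Cat.of (IsoArrow B) :=
      (ObjectProperty.lift _ (ObjectProperty.ι _ ⋙ f.mapArrow) (fun X => X.property)).toCatHom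
    have w : fst ≫ (show Cat.of (Arrow A) ⟶ Cat.of (Arrow B) from f.mapArrow.toCatHom) =
        snd ≫ (show Cat.of (IsoArrow B) ⟶ Cat.of (Arrow B) from (isoArrowInclusion B).toCatHom) := rfl
    have hfac := hp.lift_fst fst snd w
    have hobj := Functor.congr_obj (congrArg Cat.Hom.toFunctor hfac) (⟨Arrow.mk g, hg⟩ : P)
    have hiso := ((hp.lift fst snd w).toFunctor.obj ⟨Arrow.mk g, hg⟩).property
    have heq : ((hp.lift fst snd w).toFunctor.obj ⟨Arrow.mk g, hg⟩).obj = Arrow.mk g := hobj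
    rw [heq] at hiso
    exact hiso
  · intro hf
    have liftIso : ∀ (s : Limits.PullbackCone
        (show Cat.of (Arrow A) ⟶ Cat.of (Arrow B) from f.mapArrow.toCatHom)
        (show Cat.of (IsoArrow B) ⟶ Cat.of (Arrow B) from (isoArrowInclusion B).toCatHom))
        (X : s.pt), IsIso ((s.fst.toFunctor.obj X).hom) := by
      intro s X
      have e : f.mapArrow.obj (s.fst.toFunctor.obj X) = (s.snd.toFunctor.obj X).obj :=
        Functor.congr_obj (congrArg Cat.Hom.toFunctor s.condition) X
      have : IsIso (f.mapArrow.obj (s.fst.toFunctor.obj X)).hom := by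
        rw [e]; exact (s.snd.toFunctor.obj X).property
      exact hf _ this
    refine IsPullback.of_isLimit (Limits.PullbackCone.IsLimit.mk
      (fst := (show Cat.of (IsoArrow A) ⟶ Cat.of (Arrow A) from (isoArrowInclusion A).toCatHom))
      (snd := (show Cat.of (IsoArrow A) ⟶ Cat.of (IsoArrow B) from (mapIsoArrow f).toCatHom))
      rfl
      (fun s => ((ObjectProperty.lift _ s.fst.toFunctor (liftIso s)).toCatHom : s.pt ⟶ Cat.of (IsoArrow A)))
      (fun s => rfl)
      (fun s => Cat.ext (incl_cancel _ _ _ (congrArg Cat.Hom.toFunctor s.condition)))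
      (fun s m h1 _ => by dsimp only; exact Cat.ext (incl_cancel (fun g : Arrow A => IsIso g.hom) (P := s.pt) m.toFunctor (ObjectProperty.lift _ s.fst.toFunctor (liftIso s)) (congrArg Cat.Hom.toFunctor h1))))
end
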